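/- Let Δ be a 2-dimensional Buchsbaum simplicial complex and F = {a,b,c} a 3-element set, and set Γ = Δ ∪ ⟨F⟩. If Δ ∩ ⟨F⟩ = ⟨{a,b}⟩, then Γ is Buchsbaum and h(Γ) = h(Δ) + (0,1,0,0). -/

import Mathlib

open Finset

noncomputable section

/-- `Δ` is a simplicial complex on `[n] = {1,…,n}`: a collection of subsets of `[n]`,
closed under taking subsets, containing every singleton `{i}` for `i ∈ [n]`. -/
def IsComplexOn (n : ℕ) (Δ : Finset (Finset ℕ)) : Prop :=
  (∀ F ∈ Δ, ∀ G ⊆ F, G ∈ Δ) ∧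
  (∀ F ∈ Δ, ∀ i ∈ F, i ∈ Finset.Icc 1 n) ∧
  (∀ i ∈ Finset.Icc 1 n, ({i} : Finset ℕ) ∈ Δ)

/-- a simplicial complex whose vertex set is contained in `[n]`:
a downward closed collection of subsets of `[n]`. -/
def IsComplexIn (n : ℕ) (Δ : Finset (Finset ℕ)) : Prop :=
  (∀ F ∈ Δ, ∀ G ⊆ F, G ∈ Δ) ∧ (∀ F ∈ Δ, ∀ i ∈ F, i ∈ Finset.Icc 1 n)

/-- the faces of `Δ` with `m` vertices -/
def facesOf (Δ : Finset (Finset ℕ)) (m : ℕ) : Finset (Finset ℕ) :=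
  Δ.filter fun F => F.card = m

/-- `fVec Δ j = f_{j-1}(Δ)`, the number of faces of `Δ` with `j` vertices;
by convention `f_{-1}(Δ) = 1`. -/
def fVec (Δ : Finset (Finset ℕ)) (j : ℕ) : ℤ :=
  if j = 0 then 1 else ((facesOf Δ j).card : ℤ)

/-- the `h`-vector of a `(d-1)`-dimensional complex, defined by
`∑ f_{i-1} (x-1)^{d-i} = ∑ h_i x^{d-i}`, i.e.
`h_i = ∑_{j=0}^{i} (-1)^{i-j} C(d-j, i-j) f_{j-1}`. -/
def hVec (d : ℕ) (Δ : Finset (Finset ℕ)) (i : ℕ) : ℤ :=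
  ∑ j ∈ Finset.range (i + 1),
    (-1 : ℤ) ^ (i - j) * ((d - j).choose (i - j) : ℤ) * fVec Δ j

/-- the dimension `max {k : f_k(Δ) ≠ 0}` of `Δ`, as an integer -/
def dimZ (Δ : Finset (Finset ℕ)) : ℤ := ((Δ.sup Finset.card : ℕ) : ℤ) - 1

/-- the link `lk_Δ(F) = {G : G ∩ F = ∅, G ∪ F ∈ Δ}` -/
def link (Δ : Finset (Finset ℕ)) (F : Finset ℕ) : Finset (Finset ℕ) :=
  Δ.filter fun G => Disjoint G F ∧ G ∪ F ∈ Δ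

variable (K : Type) [Field K]

/-- the simplicial boundary operator on formal `K`-linear combinations of
finite subsets of `ℕ` (vertices ordered by the order on `ℕ`):
`∂ F = ∑_{v ∈ F} (-1)^{#{u ∈ F : u < v}} (F \ {v})`. -/
def bdry : (Finset ℕ →₀ K) →ₗ[K] (Finset ℕ →₀ K) :=
  Finsupp.lsum K fun F => LinearMap.toSpanSingleton K (Finset ℕ →₀ K)
    (∑ v ∈ F, ((-1 : K) ^ ((F.filter fun u => u < v).card)) • Finsupp.single (F.erase v) (1 : K))

/-- the space of simplicial `K`-chains of `Δ` spanned by the faces with `m` vertices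
(for `m = 0` this is the span of the empty face, giving *reduced* homology) -/
def chains (Δ : Finset (Finset ℕ)) (m : ℕ) : Submodule K (Finset ℕ →₀ K) :=
  Submodule.span K ((fun F => Finsupp.single F (1 : K)) '' (facesOf Δ m : Set (Finset ℕ)))

/-- the dimension of the reduced homology of `Δ` at faces of cardinality `m`:
`dim (ker ∂ ∩ C_m) - dim (∂ C_{m+1})` -/
def homDim (Δ : Finset (Finset ℕ)) (m : ℕ) : ℕ :=
  Module.finrank K ↥(chains K Δ m ⊓ LinearMap.ker (bdry K))
    - Module.finrank K ↥((chains K Δ (m + 1)).map (bdry K))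

/-- the reduced Betti number `β_i(Δ; K) = dim_K H̃_i(Δ; K)` for `i : ℤ` -/
def betti (Δ : Finset (Finset ℕ)) (i : ℤ) : ℕ :=
  if 0 ≤ i + 1 then homDim K Δ (i + 1).toNat else 0

/-- all facets (maximal faces) of `Δ` have the same cardinality -/
def IsPure (Δ : Finset (Finset ℕ)) : Prop :=
  ∀ F ∈ Δ, (∀ G ∈ Δ, F ⊆ G → F = G) → F.card = Δ.sup Finset.card

/-- `Δ` is Cohen–Macaulay (over `K`): for every face `F ∈ Δ` (including `∅`),
`β_i(lk_Δ(F)) = 0` for all `i ≠ dim Δ - |F|`. -/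
def IsCohenMacaulay (Δ : Finset (Finset ℕ)) : Prop :=
  ∀ F ∈ Δ, ∀ i : ℤ, i ≠ dimZ Δ - F.card → betti K (link Δ F) i = 0

/-- `Δ` is Buchsbaum (over `K`): `Δ` is pure and the link of every vertex is
Cohen–Macaulay. -/
def IsBuchsbaum (Δ : Finset (Finset ℕ)) : Prop :=
  IsPure Δ ∧ ∀ v : ℕ, ({v} : Finset ℕ) ∈ Δ → IsCohenMacaulay K (link Δ {v})

/-- `Δ` is connected: any two vertices are joined by a path of edges of `Δ` -/
def IsConnectedComplex (Δ : Finset (Finset ℕ)) : Prop :=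
  ∀ u v : ℕ, ({u} : Finset ℕ) ∈ Δ → ({v} : Finset ℕ) ∈ Δ →
    Relation.ReflTransGen (fun a b : ℕ => a ≠ b ∧ ({a, b} : Finset ℕ) ∈ Δ) u v

/-- `Δ` is link-acyclic: `β_i(lk_Δ(v)) = 0` for every vertex `v` of `Δ` and every `i` -/
def IsLinkAcyclic (Δ : Finset (Finset ℕ)) : Prop :=
  ∀ v : ℕ, ({v} : Finset ℕ) ∈ Δ → ∀ i : ℤ, betti K (link Δ {v}) i = 0

/-- `Δ` is `2`-dimensional with `h`-vector `(a, b, c, e)` -/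
def hVector3 (Δ : Finset (Finset ℕ)) (a b c e : ℤ) : Prop :=
  hVec 3 Δ 0 = a ∧ hVec 3 Δ 1 = b ∧ hVec 3 Δ 2 = c ∧ hVec 3 Δ 3 = e

/-- `macaulay2 a = a^⟨2⟩`: if `a = C(b,2) + r` is the (greedy) `2`-nd Macaulay
representation (`b` maximal with `C(b,2) ≤ a`, `0 ≤ r < b`, `r = C(r,1)`), then
`a^⟨2⟩ = C(b+1,3) + C(r+1,2)`, and `0^⟨2⟩ = 0`. -/
def macaulay2 (a : ℕ) : ℕ :=
  if a = 0 then 0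
  else
    (Nat.findGreatest (fun t => t.choose 2 ≤ a) (a + 2) + 1).choose 3
      + (a - (Nat.findGreatest (fun t => t.choose 2 ≤ a) (a + 2)).choose 2 + 1).choose 2

/-- `modRep n i = ī`, the unique element of `[n] = {1,…,n}` congruent to `i` mod `n` -/
def modRep (n : ℕ) (i : ℤ) : ℕ := ((i - 1) % (n : ℤ)).toNat + 1


end

/-!
The new triangle `{a, b, c}` meets `Δ` along the edge `{a, b}` and brings one new vertex `c`.
Links of vertices outside the triangle do not change, the link of `c` is the edge `{a, b}`,
and the links of `a` and `b` are the (connected, pure, one-dimensional) links in `Δ` with a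
pendant edge `{b, c}` resp. `{a, c}` attached. A one-dimensional pure complex is
Cohen–Macaulay as soon as it is connected, and attaching a pendant edge changes neither
`H̃₀` nor purity: the new vertex `c` adds one cycle `c - b` and one boundary `∂{b, c}`, both
detected by the coefficient of `{c}`. For the `h`-vector, `f` is additive over
`Γ = Δ ∪ ⟨F⟩` with `Δ ∩ ⟨F⟩ = ⟨{a, b}⟩`, so `h(Γ) = h(Δ) + h(⟨F⟩) - h(⟨{a, b}⟩)`.
-/

def IsDownwardClosed (X : Finset (Finset ℕ)) : Prop :=
  ∀ F ∈ X, ∀ G ⊆ F, G ∈ X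

section Combinatorics

variable {X Y : Finset (Finset ℕ)} {F G M S : Finset ℕ}

lemma isDownwardClosed_powerset (S : Finset ℕ) : IsDownwardClosed S.powerset :=
  fun _ hF _ hGF => mem_powerset.2 (hGF.trans (mem_powerset.1 hF))

lemma IsDownwardClosed.union (hX : IsDownwardClosed X) (hY : IsDownwardClosed Y) :
    IsDownwardClosed (X ∪ Y) := by
  intro F hF G hGF
  rcases mem_union.1 hF with hF | hF
  · exact mem_union_left _ (hX F hF G hGF)
  · exact mem_union_right _ (hY F hF G hGF)

lemma IsDownwardClosed.isDownwardClosed_link (hX : IsDownwardClosed X) (F : Finset ℕ) :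
    IsDownwardClosed (link X F) := by
  intro G hG H hHG
  obtain ⟨hGX, hdisj, hGF⟩ := mem_filter.1 hG
  exact mem_filter.2 ⟨hX G hGX H hHG, hdisj.mono_left hHG,
    hX _ hGF _ (union_subset_union hHG subset_rfl)⟩

lemma IsDownwardClosed.sdiff_mem_link (hX : IsDownwardClosed X) (hM : M ∈ X) (hFM : F ⊆ M) :
    M \ F ∈ link X F :=
  mem_filter.2 ⟨hX M hM _ sdiff_subset, sdiff_disjoint, by rwa [sdiff_union_of_subset hFM]⟩

lemma IsDownwardClosed.link_eq_empty (hX : IsDownwardClosed X) (hF : F ∉ X) : link X F = ∅ :=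
  filter_false_of_mem fun _ _ hG => hF (hX _ hG.2 F subset_union_right)

lemma link_empty (X : Finset (Finset ℕ)) : link X ∅ = X := by
  ext G; simp [link]

lemma mem_of_mem_link (hG : G ∈ link X F) : G ∈ X := (mem_filter.1 hG).1

lemma card_add_card_le_sup_of_mem_link (hG : G ∈ link X F) :
    G.card + F.card ≤ X.sup card := by
  obtain ⟨-, hdisj, hGF⟩ := mem_filter.1 hG
  rw [← card_union_of_disjoint hdisj]
  exact le_sup (f := card) hGF

lemma IsDownwardClosed.link_union_powerset_of_subset (hX : IsDownwardClosed X) (hFS : F ⊆ S) :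
    link (X ∪ S.powerset) F = link X F ∪ (S \ F).powerset := by
  ext G
  simp only [link, mem_filter, mem_union, mem_powerset]
  constructor
  · rintro ⟨-, hdisj, hGX | hGS⟩
    · exact Or.inl ⟨hX _ hGX G subset_union_left, hdisj, hGX⟩
    · exact Or.inr (subset_sdiff.2 ⟨subset_union_left.trans hGS, hdisj⟩)
  · rintro (⟨hGX, hdisj, hGF⟩ | hG)
    · exact ⟨Or.inl hGX, hdisj, Or.inl hGF⟩
    · obtain ⟨hGS, hdisj⟩ := subset_sdiff.1 hG
      exact ⟨Or.inr hGS, hdisj, Or.inr (union_subset hGS hFS)⟩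

lemma IsDownwardClosed.link_union_powerset_of_not_subset (hX : IsDownwardClosed X)
    (hFS : ¬ F ⊆ S) : link (X ∪ S.powerset) F = link X F := by
  ext G
  simp only [link, mem_filter, mem_union, mem_powerset]
  constructor
  · rintro ⟨-, hdisj, hGX | hGS⟩
    · exact ⟨hX _ hGX G subset_union_left, hdisj, hGX⟩
    · exact absurd (subset_union_right.trans hGS) hFS
  · rintro ⟨hGX, hdisj, hGF⟩
    exact ⟨Or.inl hGX, hdisj, Or.inl hGF⟩

lemma exists_maximal_superset (hF : F ∈ X) :
    ∃ M ∈ X, F ⊆ M ∧ ∀ G ∈ X, M ⊆ G → M = G := by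
  obtain ⟨M, hFM, hM⟩ := X.finite_toSet.exists_le_maximal hF
  exact ⟨M, hM.prop, hFM, fun G hG hMG => le_antisymm hMG (hM.2 hG hMG)⟩

lemma IsPure.exists_superset_card_eq_sup (hP : IsPure X) (hF : F ∈ X) :
    ∃ M ∈ X, F ⊆ M ∧ M.card = X.sup card := by
  obtain ⟨M, hM, hFM, hmax⟩ := exists_maximal_superset hF
  exact ⟨M, hM, hFM, hP M hM hmax⟩

lemma IsPure.sup_card_link_add_card (hX : IsDownwardClosed X) (hP : IsPure X) (hF : F ∈ X) :
    (link X F).sup card + F.card = X.sup card := by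
  obtain ⟨M, hM, hFM, hMcard⟩ := hP.exists_superset_card_eq_sup hF
  have hle : (link X F).sup card ≤ X.sup card - F.card :=
    Finset.sup_le fun G hG => by have := card_add_card_le_sup_of_mem_link hG; omega
  have hge : (M \ F).card ≤ (link X F).sup card := le_sup (f := card) (hX.sdiff_mem_link hM hFM)
  have hFcard : F.card ≤ M.card := card_le_card hFM
  rw [card_sdiff_of_subset hFM] at hge
  omega

lemma IsPure.isPure_link (hX : IsDownwardClosed X) (hP : IsPure X) (hF : F ∈ X) :
    IsPure (link X F) := by
  intro G hG hmax
  obtain ⟨-, hdisj, hGF⟩ := mem_filter.1 hG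
  obtain ⟨M, hM, hGFM, hMcard⟩ := hP.exists_superset_card_eq_sup hGF
  have hFM : F ⊆ M := subset_union_right.trans hGFM
  have hGM : G = M \ F :=
    hmax _ (hX.sdiff_mem_link hM hFM) (subset_sdiff.2 ⟨subset_union_left.trans hGFM, hdisj⟩)
  have := hP.sup_card_link_add_card hX hF
  have hFcard : F.card ≤ M.card := card_le_card hFM
  rw [hGM, card_sdiff_of_subset hFM]
  omega

lemma IsPure.union (hX : IsPure X) (hY : IsPure Y) (h : X.sup card = Y.sup card) :
    IsPure (X ∪ Y) := by
  intro F hF hmax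
  rw [sup_union, ← h, sup_idem]
  rcases mem_union.1 hF with hF | hF
  · exact hX F hF fun G hG => hmax G (mem_union_left _ hG)
  · rw [h]; exact hY F hF fun G hG => hmax G (mem_union_right _ hG)

lemma sup_card_powerset (S : Finset ℕ) : S.powerset.sup card = S.card :=
  le_antisymm (Finset.sup_le fun _ hG => card_le_card (mem_powerset.1 hG))
    (le_sup (f := card) (mem_powerset_self S))

lemma isPure_powerset (S : Finset ℕ) : IsPure S.powerset := by
  intro F _ hmax
  rw [hmax S (mem_powerset_self S) (mem_powerset.1 ‹_›), sup_card_powerset]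

lemma powerset_pair (b c : ℕ) :
    ({b, c} : Finset ℕ).powerset = {∅, {b}, {c}, {b, c}} := by
  ext G
  simp only [mem_powerset, mem_insert, mem_singleton]
  constructor
  · intro h
    by_cases hb : b ∈ G <;> by_cases hc : c ∈ G <;> grind
  · rintro (rfl | rfl | rfl | rfl) <;> simp [subset_iff]

lemma union_powerset_pair {b c : ℕ} (h0 : ∅ ∈ X) (hb : {b} ∈ X) :
    X ∪ ({b, c} : Finset ℕ).powerset = insert {b, c} (insert {c} X) := by
  rw [powerset_pair]
  ext G
  simp only [mem_union, mem_insert, mem_singleton]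
  grind

end Combinatorics

section Homology

open Submodule

variable (K : Type) [Field K] {X : Finset (Finset ℕ)}

lemma bdry_single (F : Finset ℕ) :
    bdry K (Finsupp.single F 1) =
      ∑ v ∈ F, (-1 : K) ^ (F.filter fun u => u < v).card • Finsupp.single (F.erase v) 1 := by
  simp [bdry]

lemma bdry_single_singleton (v : ℕ) :
    bdry K (Finsupp.single {v} 1) = Finsupp.single ∅ 1 := by
  simp [bdry_single, filter_singleton]

instance (X : Finset (Finset ℕ)) (m : ℕ) : FiniteDimensional K (chains K X m) :=
  FiniteDimensional.span_of_finite K ((finite_toSet _).image _)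

lemma finrank_sup_span_singleton_of_notMem {V : Type} [AddCommGroup V] [Module K V]
    {p : Submodule K V} [FiniteDimensional K p] {v : V} (hv : v ∉ p) :
    Module.finrank K ↥(p ⊔ span K {v}) = Module.finrank K p + 1 := by
  have h := finrank_sup_add_finrank_inf_eq p (span K {v})
  rwa [disjoint_iff.1 (disjoint_span_singleton_of_notMem hv), finrank_bot, add_zero,
    finrank_span_singleton (by rintro rfl; exact hv p.zero_mem)] at h

lemma homDim_eq_zero_of_le (m : ℕ)
    (h : chains K X m ⊓ LinearMap.ker (bdry K) ≤ (chains K X (m + 1)).map (bdry K)) :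
    homDim K X m = 0 :=
  Nat.sub_eq_zero_of_le (Submodule.finrank_mono h)

lemma betti_eq_zero_of_forall_card_ne (i : ℤ) (h : ∀ G ∈ X, (G.card : ℤ) ≠ i + 1) :
    betti K X i = 0 := by
  unfold betti
  split_ifs with hi
  · apply homDim_eq_zero_of_le
    have : chains K X (i + 1).toNat = ⊥ := by
      rw [chains, span_eq_bot]
      rintro _ ⟨G, hG, -⟩
      obtain ⟨hGX, hGcard⟩ := mem_filter.1 hG
      exact absurd (by omega) (h G hGX)
    simp [this]
  · rfl

lemma betti_zero (X : Finset (Finset ℕ)) : betti K X 0 = homDim K X 1 := by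
  simp [betti]

lemma chains_zero_le (X : Finset (Finset ℕ)) :
    chains K X 0 ≤ span K {Finsupp.single ∅ 1} := by
  refine span_le.2 ?_
  rintro _ ⟨G, hG, rfl⟩
  rw [card_eq_zero.1 (mem_filter.1 hG).2]
  exact mem_span_singleton_self _

lemma single_mem_chains {G : Finset ℕ} {m : ℕ} (hG : G ∈ X) (hm : G.card = m) :
    Finsupp.single G 1 ∈ chains K X m :=
  subset_span ⟨G, mem_filter.2 ⟨hG, hm⟩, rfl⟩

lemma betti_neg_one_eq_zero (hX : IsDownwardClosed X) {F : Finset ℕ} (hF : F ∈ X)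
    (hne : F.Nonempty) : betti K X (-1) = 0 := by
  obtain ⟨v, hv⟩ := hne
  have hvX : {v} ∈ X := hX F hF _ (singleton_subset_iff.2 hv)
  rw [show betti K X (-1) = homDim K X 0 by simp [betti]]
  refine homDim_eq_zero_of_le K 0 (inf_le_left.trans ((chains_zero_le K X).trans ?_))
  rw [span_le, Set.singleton_subset_iff, ← bdry_single_singleton K v]
  exact mem_map_of_mem (single_mem_chains K hvX (card_singleton v))

end Homology

section Pendant

open Submodule

variable (K : Type) [Field K] {X L : Finset (Finset ℕ)} {b c : ℕ}

lemma sup_span_singleton_inf_ker {V W : Type} [AddCommGroup V] [Module K V] [AddCommGroup W]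
    [Module K W] (f : V →ₗ[K] W) (p : Submodule K V) {x y : V} (hy : y ∈ p)
    (hxy : f x = f y) :
    (p ⊔ span K {x}) ⊓ LinearMap.ker f = (p ⊓ LinearMap.ker f) ⊔ span K {x - y} := by
  have hker : x - y ∈ LinearMap.ker f := by rw [LinearMap.mem_ker, map_sub, hxy, sub_self]
  apply le_antisymm
  · rintro z ⟨hz, hfz⟩
    obtain ⟨w, hw, _, ht, rfl⟩ := mem_sup.1 hz
    obtain ⟨t, rfl⟩ := mem_span_singleton.1 ht
    have hdec : w + t • x = (w + t • y) + t • (x - y) := by rw [smul_sub]; abel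
    have hwy : w + t • y ∈ LinearMap.ker f := by
      have := (LinearMap.ker f).sub_mem hfz ((LinearMap.ker f).smul_mem t hker)
      rwa [hdec, add_sub_cancel_right] at this
    rw [hdec]
    exact add_mem (mem_sup_left ⟨add_mem hw (p.smul_mem t hy), hwy⟩)
      (mem_sup_right (smul_mem _ t (mem_span_singleton_self _)))
  · refine sup_le (inf_le_inf_right _ le_sup_left) ?_
    rw [span_le, Set.singleton_subset_iff]
    exact ⟨sub_mem (mem_sup_right (mem_span_singleton_self x)) (mem_sup_left hy), hker⟩

lemma lapply_bdry_single_eq_zero {G : Finset ℕ} (hc : c ∉ G) :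
    (Finsupp.lapply {c} : (Finset ℕ →₀ K) →ₗ[K] K) (bdry K (Finsupp.single G 1)) = 0 := by
  rw [bdry_single, map_sum]
  refine sum_eq_zero fun v _ => ?_
  have : G.erase v ≠ {c} := fun h => hc (erase_subset v G (h ▸ mem_singleton_self c))
  simp [Finsupp.single_eq_of_ne' this]

lemma lapply_bdry_single_pair_ne_zero (hbc : b ≠ c) :
    (Finsupp.lapply {c} : (Finset ℕ →₀ K) →ₗ[K] K)
      (bdry K (Finsupp.single {b, c} 1)) ≠ 0 := by
  have hbc' : ({b} : Finset ℕ) ≠ {c} := by simpa using hbc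
  rw [bdry_single, sum_pair hbc, erase_insert (by simpa using hbc), erase_insert_of_ne hbc,
    erase_singleton]
  simp [Finsupp.single_eq_of_ne' hbc']

lemma chains_le_ker_lapply (hc : ∀ G ∈ X, c ∉ G) (m : ℕ) :
    chains K X m ≤ LinearMap.ker (Finsupp.lapply {c} : (Finset ℕ →₀ K) →ₗ[K] K) := by
  refine span_le.2 ?_
  rintro _ ⟨G, hG, rfl⟩
  have hGc : G ≠ {c} := fun h => hc G (mem_filter.1 hG).1 (h ▸ mem_singleton_self c)
  simp [Finsupp.single_eq_of_ne' hGc]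

lemma map_bdry_chains_le_ker_lapply (hc : ∀ G ∈ X, c ∉ G) (m : ℕ) :
    (chains K X m).map (bdry K) ≤
      LinearMap.ker (Finsupp.lapply {c} : (Finset ℕ →₀ K) →ₗ[K] K) := by
  rw [chains, map_span, span_le]
  rintro _ ⟨_, ⟨G, hG, rfl⟩, rfl⟩
  exact lapply_bdry_single_eq_zero K (hc G (mem_filter.1 hG).1)

lemma homDim_one_insert_pendant (hbc : b ≠ c) (hb : {b} ∈ L) (hc : ∀ G ∈ L, c ∉ G) :
    homDim K (insert {b, c} (insert {c} L)) 1 = homDim K L 1 := by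
  have hchains1 : chains K (insert {b, c} (insert {c} L)) 1 =
      chains K L 1 ⊔ span K {Finsupp.single {c} 1} := by
    rw [chains, chains, facesOf, facesOf, filter_insert, filter_insert]
    simp [card_pair hbc, Set.image_insert_eq, span_insert, sup_comm]
  have hchains2 : chains K (insert {b, c} (insert {c} L)) 2 =
      chains K L 2 ⊔ span K {Finsupp.single {b, c} 1} := by
    rw [chains, chains, facesOf, facesOf, filter_insert, filter_insert]
    simp [card_pair hbc, Set.image_insert_eq, span_insert, sup_comm]
  have hcycles : chains K (insert {b, c} (insert {c} L)) 1 ⊓ LinearMap.ker (bdry K) =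
      (chains K L 1 ⊓ LinearMap.ker (bdry K)) ⊔
        span K {Finsupp.single {c} 1 - Finsupp.single {b} 1} := by
    rw [hchains1]
    exact sup_span_singleton_inf_ker K _ _ (single_mem_chains K hb (card_singleton b))
      (by rw [bdry_single_singleton, bdry_single_singleton])
  have hboundaries : (chains K (insert {b, c} (insert {c} L)) 2).map (bdry K) =
      (chains K L 2).map (bdry K) ⊔ span K {bdry K (Finsupp.single {b, c} 1)} := by
    rw [hchains2, Submodule.map_sup, map_span, Set.image_singleton]
  have hcycle_new : Finsupp.single {c} 1 - Finsupp.single {b} 1 ∉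
      chains K L 1 ⊓ LinearMap.ker (bdry K) := by
    intro h
    have := chains_le_ker_lapply K hc 1 (mem_inf.1 h).1
    simp_all [Finsupp.single_eq_of_ne' (by simpa using hbc : ({b} : Finset ℕ) ≠ {c})]
  have hboundary_new : bdry K (Finsupp.single {b, c} 1) ∉ (chains K L 2).map (bdry K) :=
    fun h => lapply_bdry_single_pair_ne_zero K hbc (map_bdry_chains_le_ker_lapply K hc 2 h)
  simp only [homDim, Nat.reduceAdd]
  rw [hcycles, hboundaries, finrank_sup_span_singleton_of_notMem K hcycle_new,
    finrank_sup_span_singleton_of_notMem K hboundary_new]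
  omega

end Pendant

section CohenMacaulay

open Submodule

variable (K : Type) [Field K] {X L Δ : Finset (Finset ℕ)}

lemma isCohenMacaulay_of_sup_card_eq_two (hX : IsDownwardClosed X) (hP : IsPure X)
    (hsup : X.sup card = 2) (hconn : homDim K X 1 = 0) : IsCohenMacaulay K X := by
  intro F hF i hi
  have hdim : dimZ X = 1 := by simp [dimZ, hsup]
  rw [hdim] at hi
  by_cases hno : i + 1 < 0 ∨ 2 - (F.card : ℤ) < i + 1
  · refine betti_eq_zero_of_forall_card_ne K i fun G hG => ?_
    have := card_add_card_le_sup_of_mem_link hG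
    omega
  obtain rfl | ⟨rfl, hF0⟩ : i = -1 ∨ (i = 0 ∧ F.card = 0) := by omega
  · obtain ⟨M, hM, hFM, hMcard⟩ := hP.exists_superset_card_eq_sup hF
    refine betti_neg_one_eq_zero K (hX.isDownwardClosed_link F) (hX.sdiff_mem_link hM hFM) ?_
    rw [← card_pos, card_sdiff_of_subset hFM]
    omega
  · rwa [card_eq_zero.1 hF0, link_empty, betti_zero]

lemma homDim_one_powerset_singleton (b : ℕ) : homDim K ({b} : Finset ℕ).powerset 1 = 0 := by
  refine homDim_eq_zero_of_le K 1 fun x ⟨hx, hker⟩ => ?_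
  have hchains : chains K ({b} : Finset ℕ).powerset 1 ≤ span K {Finsupp.single {b} 1} := by
    refine span_le.2 ?_
    rintro _ ⟨G, hG, rfl⟩
    obtain ⟨hGb, hGcard⟩ := mem_filter.1 hG
    rw [eq_of_subset_of_card_le (mem_powerset.1 hGb) (by simp [hGcard])]
    exact mem_span_singleton_self _
  obtain ⟨t, rfl⟩ := mem_span_singleton.1 (hchains hx)
  rw [SetLike.mem_coe, LinearMap.mem_ker, map_smul, bdry_single_singleton, smul_eq_zero] at hker
  simp [hker.resolve_right (by simp)]

lemma isCohenMacaulay_powerset_pair {a b : ℕ} (hab : a ≠ b) :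
    IsCohenMacaulay K ({a, b} : Finset ℕ).powerset := by
  refine isCohenMacaulay_of_sup_card_eq_two K (isDownwardClosed_powerset _) (isPure_powerset _)
    (by rw [sup_card_powerset, card_pair hab]) ?_
  have hsplit : ({a, b} : Finset ℕ).powerset =
      ({b} : Finset ℕ).powerset ∪ ({b, a} : Finset ℕ).powerset := by
    rw [pair_comm, union_eq_right.2 (powerset_mono.2 (by simp))]
  rw [hsplit, union_powerset_pair (empty_mem_powerset _) (mem_powerset_self _),
    homDim_one_insert_pendant K hab.symm (mem_powerset_self _) (by simpa using hab),
    homDim_one_powerset_singleton]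

lemma isCohenMacaulay_union_powerset_pair {b c : ℕ} (hbc : b ≠ c) (hL : IsDownwardClosed L)
    (hP : IsPure L) (hsup : L.sup card = 2) (hconn : homDim K L 1 = 0) (hb : {b} ∈ L)
    (hc : ∀ G ∈ L, c ∉ G) : IsCohenMacaulay K (L ∪ ({b, c} : Finset ℕ).powerset) := by
  have hsup' : L.sup card = ({b, c} : Finset ℕ).powerset.sup card := by
    rw [hsup, sup_card_powerset, card_pair hbc]
  refine isCohenMacaulay_of_sup_card_eq_two K (hL.union (isDownwardClosed_powerset _))
    (hP.union (isPure_powerset _) hsup') (by rw [sup_union, ← hsup', sup_idem, hsup]) ?_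
  rw [union_powerset_pair (hL _ hb ∅ (empty_subset _)) hb, homDim_one_insert_pendant K hbc hb hc,
    hconn]

lemma isCohenMacaulay_link_union_triangle {x y c : ℕ} (hxy : x ≠ y) (hxc : x ≠ c)
    (hyc : y ≠ c) (hΔ : IsDownwardClosed Δ) (hP : IsPure Δ) (hsup : Δ.sup card = 3)
    (hxyΔ : {x, y} ∈ Δ) (hc : ∀ G ∈ Δ, c ∉ G) (hCM : IsCohenMacaulay K (link Δ {x})) :
    IsCohenMacaulay K (link (Δ ∪ ({x, y, c} : Finset ℕ).powerset) {x}) := by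
  have hx : {x} ∈ Δ := hΔ _ hxyΔ _ (by simp)
  have hsdiff : ({x, y, c} : Finset ℕ) \ {x} = {y, c} := by
    ext; simp only [mem_sdiff, mem_insert, mem_singleton]; grind
  have hsupL : (link Δ {x}).sup card = 2 := by
    have := hP.sup_card_link_add_card hΔ hx
    rw [card_singleton] at this
    omega
  have hconn : homDim K (link Δ {x}) 1 = 0 := by
    have h0 : ∅ ∈ link Δ {x} := by simpa using hΔ.sdiff_mem_link hx subset_rfl
    have := hCM ∅ h0 0 (by simp [dimZ, hsupL])
    rwa [link_empty, betti_zero] at this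
  have hy : {y} ∈ link Δ {x} :=
    mem_filter.2 ⟨hΔ _ hxyΔ _ (by simp), disjoint_singleton.2 hxy.symm,
      by rwa [union_comm, ← insert_eq]⟩
  rw [hΔ.link_union_powerset_of_subset (by simp), hsdiff]
  exact isCohenMacaulay_union_powerset_pair K hyc (hΔ.isDownwardClosed_link _)
    (hP.isPure_link hΔ hx) hsupL hconn hy fun G hG => hc G (mem_of_mem_link hG)

end CohenMacaulay

lemma isBuchsbaum_union_powerset_triangle (K : Type) [Field K] {Δ : Finset (Finset ℕ)}
    {a b c : ℕ} (hab : a ≠ b) (hac : a ≠ c) (hbc : b ≠ c) (hΔ : IsDownwardClosed Δ)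
    (hsup : Δ.sup card = 3) (hB : IsBuchsbaum K Δ) (habΔ : {a, b} ∈ Δ)
    (hc : ∀ G ∈ Δ, c ∉ G) :
    IsBuchsbaum K (Δ ∪ ({a, b, c} : Finset ℕ).powerset) := by
  have hcard : ({a, b, c} : Finset ℕ).card = 3 :=
    card_eq_three.2 ⟨a, b, c, hab, hac, hbc, rfl⟩
  refine ⟨hB.1.union (isPure_powerset _) (by rw [hsup, sup_card_powerset, hcard]),
    fun v hv => ?_⟩
  by_cases hva : v = a
  · subst hva
    exact isCohenMacaulay_link_union_triangle K hab hac hbc hΔ hB.1 hsup habΔ hc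
      (hB.2 v (hΔ _ habΔ _ (by simp)))
  by_cases hvb : v = b
  · subst hvb
    rw [insert_comm]
    exact isCohenMacaulay_link_union_triangle K (Ne.symm hab) hbc hac hΔ hB.1 hsup
      (by rwa [pair_comm]) hc (hB.2 v (hΔ _ habΔ _ (by simp)))
  by_cases hvc : v = c
  · subst hvc
    have hsdiff : ({a, b, v} : Finset ℕ) \ {v} = {a, b} := by
      ext; simp only [mem_sdiff, mem_insert, mem_singleton]; grind
    rw [hΔ.link_union_powerset_of_subset (by simp), hsdiff,
      hΔ.link_eq_empty fun h => hc _ h (mem_singleton_self v), empty_union]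
    exact isCohenMacaulay_powerset_pair K hab
  have hvS : ¬ {v} ⊆ ({a, b, c} : Finset ℕ) := by simp [hva, hvb, hvc]
  rw [hΔ.link_union_powerset_of_not_subset hvS]
  exact hB.2 v ((mem_union.1 hv).resolve_right (by rwa [mem_powerset]))

lemma fVec_union_add_fVec_inter (X Y : Finset (Finset ℕ)) (j : ℕ) :
    fVec (X ∪ Y) j + fVec (X ∩ Y) j = fVec X j + fVec Y j := by
  unfold fVec facesOf
  split_ifs
  · rfl
  · rw [filter_union, filter_inter_distrib]
    exact_mod_cast card_union_add_card_inter _ _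

lemma fVec_powerset (S : Finset ℕ) (j : ℕ) : fVec S.powerset j = (S.card.choose j : ℤ) := by
  unfold fVec facesOf
  split_ifs with hj
  · simp [hj]
  · rw [← powersetCard_eq_filter, card_powersetCard]

lemma hVec_union_add_hVec_inter (d : ℕ) (X Y : Finset (Finset ℕ)) (i : ℕ) :
    hVec d (X ∪ Y) i + hVec d (X ∩ Y) i = hVec d X i + hVec d Y i := by
  simp only [hVec, ← sum_add_distrib]
  refine sum_congr rfl fun j _ => ?_
  linear_combination (-1 : ℤ) ^ (i - j) * ((d - j).choose (i - j) : ℤ) *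
    fVec_union_add_fVec_inter X Y j

/-- **Lemma 2.5.** Let `Δ` be a `2`-dimensional Buchsbaum complex, `F = {a,b,c}`,
and `Γ = Δ ∪ ⟨F⟩`. If `Δ ∩ ⟨F⟩ = ({a, b} : Finset ℕ).powerset` then `Γ` is Buchsbaum
and the `h`-vector changes as stated. -/
theorem stmt10 (K : Type) [Field K] (nn : ℕ) (Δ Γ : Finset (Finset ℕ)) (a b c : ℕ)
    (hΔ : IsComplexOn nn Δ) (hdim : dimZ Δ = 2) (hB : IsBuchsbaum K Δ)
    (hab : a ≠ b) (hac : a ≠ c) (hbc : b ≠ c)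
    (hΓ : Γ = Δ ∪ ({a, b, c} : Finset ℕ).powerset)
    (hcap : Δ ∩ ({a, b, c} : Finset ℕ).powerset = ({a, b} : Finset ℕ).powerset) :
    IsBuchsbaum K Γ ∧ hVec 3 Γ 0 = hVec 3 Δ 0 ∧
      hVec 3 Γ 1 = hVec 3 Δ 1 + 1 ∧
      hVec 3 Γ 2 = hVec 3 Δ 2 ∧
      hVec 3 Γ 3 = hVec 3 Δ 3 := by
  subst hΓ
  have habΔ : {a, b} ∈ Δ := (mem_inter.1 (hcap ▸ mem_powerset_self {a, b})).1
  have hc : ∀ G ∈ Δ, c ∉ G := fun G hG hcG => by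
    have := hcap ▸ mem_inter.2 ⟨hΔ.1 G hG {c} (by simpa), by simp⟩
    simp only [mem_powerset, singleton_subset_iff, mem_insert, mem_singleton] at this
    omega
  have hsup : Δ.sup card = 3 := by simp only [dimZ] at hdim; omega
  have hh (i : ℕ) : hVec 3 (Δ ∪ ({a, b, c} : Finset ℕ).powerset) i =
      hVec 3 Δ i + hVec 3 ({a, b, c} : Finset ℕ).powerset i -
        hVec 3 ({a, b} : Finset ℕ).powerset i := by
    have := hVec_union_add_hVec_inter 3 Δ ({a, b, c} : Finset ℕ).powerset i
    rw [hcap] at this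
    linarith
  have hcard : ({a, b, c} : Finset ℕ).card = 3 :=
    card_eq_three.2 ⟨a, b, c, hab, hac, hbc, rfl⟩
  refine ⟨isBuchsbaum_union_powerset_triangle K hab hac hbc hΔ.1 hsup hB habΔ hc,
    ?_, ?_, ?_, ?_⟩ <;> rw [hh] <;>
    simp [hVec, fVec_powerset, hcard, card_pair hab, sum_range_succ]
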